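/- arXiv:2010.10686 — 4 statements merged into one kernel-verified Lean document; each statement's English description precedes it below -/
import Mathlib

section
/- Fix integers d ≥ 1 and m ≥ 1, and for i ≥ 0 let N(i) denote the cardinality of RC(i,d) (so N(0) = 1, counting the empty word). Then for every codeword c = c_{m−1} c_{m−2} ... c_0 in RC(m,d), the lexicographic index g(c), i.e., the number of codewords of RC(m,d) lexicographically smaller than c, equals Σ_{i=0}^{m−1} c_i · N(i), where each bit c_i is viewed as the natural number 0 or 1. -/
/-!
A word `w < c` is determined by the most significant position `k` where it differs from `c`,
which splits the words below `c` into disjoint branches, one per `k`. In a binary code the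
branch at `k` is empty unless `c k = 1`, and then its words are `c` above `k`, `0` at `k` and an
arbitrary word of `RC k d` below `k`: the spacing constraint across position `k` holds
automatically because `c` itself is a codeword with a `1` at `k`. So that branch has `N(k)`
elements.
-/

/-- The (d,∞) LO-RLL code: binary words of length `m` (position `m-1` most
significant) in which any two 1's are separated by at least `d` 0's,
i.e. containing no contiguous subword `1 0^j 1` with `0 ≤ j ≤ d-1`. -/
def RC (m d : ℕ) : Set (Fin m → Fin 2) :=
  {c | ∀ i j : Fin m, c i = 1 → c j = 1 → (i : ℕ) < (j : ℕ) → (i : ℕ) + d < (j : ℕ)}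

/-- `w` is lexicographically smaller than `c` (position `m-1` most significant):
at the most significant position where they differ, `w` has the smaller symbol. -/
def wordLT {m q : ℕ} (w c : Fin m → Fin q) : Prop :=
  ∃ k : Fin m, w k < c k ∧ ∀ j : Fin m, k < j → w j = c j

/-- The lexicographic index of `c` in the code `C`: the number of codewords of
`C` lexicographically smaller than `c`. -/
noncomputable def lexIndex {m q : ℕ} (C : Set (Fin m → Fin q)) (c : Fin m → Fin q) : ℕ :=
  {w ∈ C | wordLT w c}.ncard

open scoped Function

section LexBranch

variable {m q : ℕ}

def lexBranch (C : Set (Fin m → Fin q)) (c : Fin m → Fin q) (k : Fin m) :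
    Set (Fin m → Fin q) :=
  {w ∈ C | w k < c k ∧ ∀ j, k < j → w j = c j}

theorem setOf_wordLT_eq_iUnion_lexBranch (C : Set (Fin m → Fin q)) (c : Fin m → Fin q) :
    {w ∈ C | wordLT w c} = ⋃ k, lexBranch C c k := by
  ext w
  simp only [Set.mem_sep_iff, Set.mem_iUnion, lexBranch, wordLT]
  exact ⟨fun ⟨hw, k, hk⟩ => ⟨k, hw, hk⟩, fun ⟨k, hw, hk⟩ => ⟨hw, k, hk⟩⟩

theorem pairwise_disjoint_lexBranch (C : Set (Fin m → Fin q)) (c : Fin m → Fin q) :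
    Pairwise (Disjoint on lexBranch C c) := by
  suffices ∀ k l, k < l → Disjoint (lexBranch C c k) (lexBranch C c l) from
    fun k l hkl => (lt_or_gt_of_ne hkl).elim (this k l) fun hlk => (this l k hlk).symm
  intro k l hkl
  rw [Set.disjoint_left]
  rintro w ⟨-, -, hk⟩ ⟨-, hl, -⟩
  exact (hk l hkl ▸ hl).false

theorem lexIndex_eq_sum_ncard_lexBranch (C : Set (Fin m → Fin q)) (c : Fin m → Fin q) :
    lexIndex C c = ∑ k, (lexBranch C c k).ncard := by
  rw [lexIndex, setOf_wordLT_eq_iUnion_lexBranch,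
    Set.ncard_iUnion_of_finite (fun _ => Set.toFinite _) (pairwise_disjoint_lexBranch C c),
    finsum_eq_sum_of_fintype]

theorem lexBranch_eq_empty_of_eq_zero [NeZero q] (C : Set (Fin m → Fin q))
    {c : Fin m → Fin q} {k : Fin m} (hck : c k = 0) : lexBranch C c k = ∅ :=
  Set.eq_empty_of_forall_notMem fun _ hw => (Fin.not_lt_zero _) (hck ▸ hw.2.1)

end LexBranch

section RestrictRC

variable {m d : ℕ}

theorem restrict_mem_RC {n : ℕ} (h : n ≤ m) {w : Fin m → Fin 2} (hw : w ∈ RC m d) :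
    (fun i => w (Fin.castLE h i)) ∈ RC n d :=
  fun i j => hw (Fin.castLE h i) (Fin.castLE h j)

def spliceBelow (c : Fin m → Fin 2) (k : Fin m) (v : Fin k → Fin 2) : Fin m → Fin 2 :=
  fun i => if h : (i : ℕ) < k then v ⟨i, h⟩ else if i = k then 0 else c i

variable {c : Fin m → Fin 2} {k : Fin m} {v : Fin k → Fin 2}

theorem spliceBelow_mem_RC (hc : c ∈ RC m d) (hck : c k = 1) (hv : v ∈ RC k d) :
    spliceBelow c k v ∈ RC m d := by
  intro i j hi hj hij
  unfold spliceBelow at hi hj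
  by_cases hjk : (j : ℕ) < k
  · rw [dif_pos (hij.trans hjk)] at hi
    rw [dif_pos hjk] at hj
    exact hv _ _ hi hj hij
  rw [dif_neg hjk] at hj
  split_ifs at hj
  · exact absurd hj (by decide)
  have hkj : (k : ℕ) < j := by omega
  split_ifs at hi with hik hik
  · have := hc k j hck hj hkj
    omega
  · exact absurd hi (by decide)
  · exact hc i j hi hj hij

theorem spliceBelow_mem_lexBranch (hc : c ∈ RC m d) (hck : c k = 1) (hv : v ∈ RC k d) :
    spliceBelow c k v ∈ lexBranch (RC m d) c k := by
  refine ⟨spliceBelow_mem_RC hc hck hv, ?_, fun j hj => ?_⟩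
  · simp [spliceBelow, hck]
  · simp [spliceBelow, hj.ne', Nat.not_lt_of_gt hj]

theorem image_restrict_lexBranch_RC (hc : c ∈ RC m d) (hck : c k = 1) :
    (fun w i => w (Fin.castLE k.isLt.le i)) '' lexBranch (RC m d) c k = RC k d := by
  refine Set.Subset.antisymm ?_ fun v hv => ⟨_, spliceBelow_mem_lexBranch hc hck hv, ?_⟩
  · rintro _ ⟨w, hw, rfl⟩
    exact restrict_mem_RC _ hw.1
  · funext i
    simp [spliceBelow]

theorem injOn_restrict_lexBranch (C : Set (Fin m → Fin 2)) :
    Set.InjOn (fun w i => w (Fin.castLE k.isLt.le i)) (lexBranch C c k) := by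
  rintro w ⟨-, hwk, hw⟩ w' ⟨-, hwk', hw'⟩ heq
  funext i
  rcases lt_trichotomy (i : ℕ) k with hik | hik | hik
  · simpa using congrFun heq ⟨i, hik⟩
  · have hlt : ∀ x y : Fin 2, x < y → x = 0 := by decide
    rw [Fin.ext hik, hlt _ _ hwk, hlt _ _ hwk']
  · rw [hw i hik, hw' i hik]

theorem ncard_lexBranch_RC (hc : c ∈ RC m d) :
    (lexBranch (RC m d) c k).ncard = (c k : ℕ) * (RC k d).ncard := by
  obtain hck | hck : c k = 0 ∨ c k = 1 := by omega
  · simp [lexBranch_eq_empty_of_eq_zero _ hck, hck]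
  · rw [← image_restrict_lexBranch_RC hc hck,
      (injOn_restrict_lexBranch _).ncard_image, hck]
    simp

end RestrictRC

theorem stmt1_general (d m : ℕ)
    (c : Fin m → Fin 2) (hc : c ∈ RC m d) :
    lexIndex (RC m d) c = ∑ i : Fin m, (c i : ℕ) * (RC (i : ℕ) d).ncard := by
  rw [lexIndex_eq_sum_ncard_lexBranch]
  exact Finset.sum_congr rfl fun _ _ => ncard_lexBranch_RC hc

theorem stmt1 (d m : ℕ) (hd : 1 ≤ d) (hm : 1 ≤ m)
    (c : Fin m → Fin 2) (hc : c ∈ RC m d) :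
    lexIndex (RC m d) c = ∑ i : Fin m, (c i : ℕ) * (RC (i : ℕ) d).ncard :=
  stmt1_general d m c hc
end

section
/- Define f : ℤ → ℚ by f(−2) = 1/36, f(−1) = 1/6, f(0) = 1, f(1) = 8, and f(m) = 8f(m−1) − f(m−2) + 6f(m−3) for all m ≥ 2. Then for every m ≥ 1, f(m) equals the cardinality of the OS-LOCO code OSC(m). -/
/-!
Let `q` be the alphabet size and forbid the subwords `a k, b k, a k`, where the letters `a k` are
distinct and no `b k` is an `a j`. Prepending `s` to an admissible word `w` fails exactly when
`s = a k` and `w` starts with `b k, a k`, for a unique `k`; so `N (n + 1) = q N n - Σ_k B_k n`,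
where `B_k n` counts the admissible words of length `n` starting with `b k, a k`. Prepending
`b k, a k` matches the admissible words of length `n` that do not start with `b k, a k` with
those of length `n + 2` that do, so `B_k (n + 2) + B_k n = N n`. Eliminating the `B_k` gives
`N (n + 3) = q N (n + 2) - N (n + 1) + (q - #ι) N n` for all `n ≥ 0`. For OSC (`q = 8`, patterns
`0 2 0` and `7 5 7`) this is the recurrence of `f`, and both sequences start with `1, 8, 64`.
-/

/-- The OS-LOCO code: words of length `m` over the alphabet `{0,...,7}`
(position `m-1` most significant) containing no contiguous subword `0 2 0`
and no contiguous subword `7 5 7`. -/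
def OSC (m : ℕ) : Set (Fin m → Fin 8) :=
  {c | ∀ i : ℕ, ∀ h : i + 2 < m,
      ¬(c ⟨i + 2, h⟩ = 0 ∧ c ⟨i + 1, by omega⟩ = 2 ∧ c ⟨i, by omega⟩ = 0) ∧
      ¬(c ⟨i + 2, h⟩ = 7 ∧ c ⟨i + 1, by omega⟩ = 5 ∧ c ⟨i, by omega⟩ = 7)}

variable {α ι : Type*}

def TripleFree (P : α → α → α → Prop) {n : ℕ} (c : Fin n → α) : Prop :=
  ∀ i (h : i + 2 < n), ¬P (c ⟨i, by omega⟩) (c ⟨i + 1, by omega⟩) (c ⟨i + 2, h⟩)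

theorem tripleFree_cons {P : α → α → α → Prop} {n : ℕ} (s : α) (w : Fin n → α) :
    TripleFree P (Fin.cons s w : Fin (n + 1) → α) ↔
      TripleFree P w ∧ ∀ h : 2 ≤ n, ¬P s (w ⟨0, by omega⟩) (w ⟨1, by omega⟩) :=
  ⟨fun H => ⟨fun i h => H (i + 1) (by omega), fun h => H 0 (Nat.lt_succ_of_le h)⟩,
    fun ⟨Hw, H0⟩ i h => match i with
      | 0 => H0 (by omega)
      | i + 1 => Hw i (by omega)⟩

def patternFree (a b : ι → α) (n : ℕ) : Set (Fin n → α) :=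
  {c | TripleFree (fun x y z => ∃ k, x = a k ∧ y = b k ∧ z = a k) c}

def StartsWith (x y : α) {n : ℕ} (w : Fin n → α) : Prop :=
  ∃ h : 2 ≤ n, w ⟨0, by omega⟩ = x ∧ w ⟨1, by omega⟩ = y

/-- The admissible words to which `a k` cannot be prepended. -/
def blocked (a b : ι → α) (k : ι) (n : ℕ) : Set (Fin n → α) :=
  patternFree a b n ∩ {w | StartsWith (b k) (a k) w}

variable {a b : ι → α}

theorem cons_mem_patternFree {n : ℕ} (s : α) (w : Fin n → α) :
    (Fin.cons s w : Fin (n + 1) → α) ∈ patternFree a b (n + 1) ↔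
      w ∈ patternFree a b n ∧ ∀ k, ¬(s = a k ∧ StartsWith (b k) (a k) w) := by
  simp only [patternFree, Set.mem_ofPred_eq, tripleFree_cons, StartsWith]
  grind

theorem patternFree_of_lt_three {n : ℕ} (hn : n < 3) : patternFree a b n = Set.univ :=
  Set.eq_univ_of_forall fun _ i h => absurd h (by omega)

theorem card_patternFree_succ_add_sum_card_blocked [Finite α] [Fintype ι] (ha : a.Injective)
    (n : ℕ) :
    Nat.card (patternFree a b (n + 1)) + ∑ k, Nat.card (blocked a b k n) =
      Nat.card α * Nat.card (patternFree a b n) := by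
  classical
  let Q (p : α × patternFree a b n) : Prop := ∀ k, ¬(p.1 = a k ∧ StartsWith (b k) (a k) p.2.1)
  have cons_equiv : {p // Q p} ≃ patternFree a b (n + 1) := .ofBijective
    (fun p => ⟨Fin.cons p.1.1 p.1.2.1, (cons_mem_patternFree _ _).2 ⟨p.1.2.2, p.2⟩⟩)
    ⟨fun p q h => by
      simp only [Subtype.mk.injEq, Fin.cons_inj] at h
      exact Subtype.ext (Prod.ext h.1 (Subtype.ext h.2)),
    fun c => by
      have hc := c.2
      rw [← Fin.cons_self_tail c.1, cons_mem_patternFree] at hc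
      exact ⟨⟨(c.1 0, ⟨Fin.tail c.1, hc.1⟩), hc.2⟩, Subtype.ext (Fin.cons_self_tail c.1)⟩⟩
  have blocked_equiv : (Σ k, blocked a b k n) ≃ {p // ¬Q p} := .ofBijective
    (fun w => ⟨(a w.1, ⟨w.2.1, w.2.2.1⟩), fun h => h w.1 ⟨rfl, w.2.2.2⟩⟩)
    ⟨fun ⟨k, w⟩ ⟨k', w'⟩ h => by
      simp only [Subtype.mk.injEq, Prod.mk.injEq] at h
      obtain rfl := ha h.1
      obtain rfl := Subtype.ext h.2
      rfl,
    fun ⟨p, hp⟩ => by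
      simp only [Q, not_forall, not_not] at hp
      obtain ⟨k, hk, hs⟩ := hp
      exact ⟨⟨k, p.2.1, p.2.2, hs⟩, Subtype.ext (Prod.ext hk.symm rfl)⟩⟩
  rw [← Nat.card_congr cons_equiv, ← Nat.card_sigma, Nat.card_congr blocked_equiv,
    ← Nat.card_sum, Nat.card_congr (Equiv.sumCompl Q), Nat.card_prod]

theorem startsWith_cons_cons (x y : α) {n : ℕ} (w : Fin n → α) :
    StartsWith x y (Fin.cons x (Fin.cons y w : Fin (n + 1) → α) : Fin (n + 2) → α) :=
  ⟨by omega, rfl, rfl⟩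

theorem cons_cons_mem_blocked (ha : a.Injective) {k : ι} (hb : ∀ j, b k ≠ a j) {n : ℕ}
    (w : Fin n → α) :
    (Fin.cons (b k) (Fin.cons (a k) w : Fin (n + 1) → α) : Fin (n + 2) → α) ∈
        blocked a b k (n + 2) ↔
      w ∈ patternFree a b n \ {w | StartsWith (b k) (a k) w} := by
  simp [blocked, cons_mem_patternFree, ha.eq_iff, hb, startsWith_cons_cons]

theorem card_blocked_add_two_add_card_blocked [Finite α] (ha : a.Injective) {k : ι}
    (hb : ∀ j, b k ≠ a j) (n : ℕ) :
    Nat.card (blocked a b k (n + 2)) + Nat.card (blocked a b k n) =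
      Nat.card (patternFree a b n) := by
  have prepend_equiv :
      ↥(patternFree a b n \ {w | StartsWith (b k) (a k) w}) ≃ blocked a b k (n + 2) :=
    .ofBijective (fun w => ⟨_, (cons_cons_mem_blocked ha hb w.1).2 w.2⟩)
    ⟨fun w w' h => by
      simp only [Subtype.mk.injEq, Fin.cons_inj] at h
      exact Subtype.ext h.2.2,
    fun u => by
      obtain ⟨u, hu, hn, hu0, hu1⟩ := u
      have hu_eq : Fin.cons (b k) (Fin.cons (a k) (Fin.tail (Fin.tail u))) = u := by
        rw [← hu0, ← hu1]
        exact (congrArg _ (Fin.cons_self_tail _)).trans (Fin.cons_self_tail u)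
      refine ⟨⟨Fin.tail (Fin.tail u), ?_⟩, Subtype.ext hu_eq⟩
      rw [← cons_cons_mem_blocked ha hb, hu_eq]
      exact ⟨hu, hn, hu0, hu1⟩⟩
  rw [← Nat.card_congr prepend_equiv, add_comm]
  exact Set.ncard_inter_add_ncard_sdiff_eq_ncard _ _

theorem card_patternFree_add_three [Finite α] [Fintype ι] (ha : a.Injective)
    (hb : ∀ k j, b k ≠ a j) (n : ℕ) :
    (Nat.card (patternFree a b (n + 3)) : ℤ) =
      Nat.card α * Nat.card (patternFree a b (n + 2)) - Nat.card (patternFree a b (n + 1)) +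
        (Nat.card α - Fintype.card ι) * Nat.card (patternFree a b n) := by
  have h_top := card_patternFree_succ_add_sum_card_blocked (b := b) ha (n + 2)
  have h_bottom := card_patternFree_succ_add_sum_card_blocked (b := b) ha n
  have h_blocked : ∑ k, Nat.card (blocked a b k (n + 2)) + ∑ k, Nat.card (blocked a b k n) =
      Fintype.card ι * Nat.card (patternFree a b n) := by
    rw [← Finset.sum_add_distrib, Finset.sum_congr rfl fun k _ =>
      card_blocked_add_two_add_card_blocked ha (hb k) n, Finset.sum_const, Finset.card_univ,
      smul_eq_mul]
  zify at h_top h_bottom h_blocked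
  linear_combination h_top + h_bottom - h_blocked

theorem card_patternFree_of_lt_three [Finite α] {n : ℕ} (hn : n < 3) :
    Nat.card (patternFree a b n) = Nat.card α ^ n := by
  rw [patternFree_of_lt_three hn, Nat.card_univ, Nat.card_fun, Nat.card_fin]

theorem OSC_eq_patternFree (m : ℕ) : OSC m = patternFree ![0, 7] ![2, 5] m := by
  ext c
  simp only [OSC, patternFree, TripleFree, Fin.exists_fin_two, Set.mem_ofPred_eq]
  refine forall₂_congr fun i h => ?_
  simp only [Matrix.cons_val_zero, Matrix.cons_val_one]
  tauto

theorem ncard_OSC_add_three (n : ℕ) :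
    ((OSC (n + 3)).ncard : ℤ) =
      8 * (OSC (n + 2)).ncard - (OSC (n + 1)).ncard + 6 * (OSC n).ncard := by
  simp only [OSC_eq_patternFree, ← Nat.card_coe_set_eq]
  rw [card_patternFree_add_three (by decide) (by decide)]
  simp

theorem ncard_OSC_of_lt_three {n : ℕ} (hn : n < 3) : (OSC n).ncard = 8 ^ n := by
  rw [OSC_eq_patternFree, ← Nat.card_coe_set_eq, card_patternFree_of_lt_three hn, Nat.card_fin]

theorem stmt5_general (f : ℤ → ℚ)
    (hb1 : f (-1) = 1 / 6) (hb0 : f 0 = 1) (hb : f 1 = 8)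
    (hrec : ∀ k : ℤ, 2 ≤ k → f k = 8 * f (k - 1) - f (k - 2) + 6 * f (k - 3)) :
    ∀ m : ℕ, 1 ≤ m → ((OSC m).ncard : ℚ) = f m := by
  have h_ncard (m : ℕ) : ((OSC m).ncard : ℚ) = f m := by
    induction m using Nat.strong_induction_on with
    | _ m ih =>
      match m with
      | 0 => simp [ncard_OSC_of_lt_three, hb0]
      | 1 => simp [ncard_OSC_of_lt_three, hb]
      | 2 => norm_num [ncard_OSC_of_lt_three, hrec 2 le_rfl, hb, hb0, hb1]
      | n + 3 =>
        rw [hrec _ (by omega), show ((n + 3 : ℕ) : ℤ) - 1 = (n + 2 : ℕ) by omega,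
          show ((n + 3 : ℕ) : ℤ) - 2 = (n + 1 : ℕ) by omega,
          show ((n + 3 : ℕ) : ℤ) - 3 = n by omega,
          ← ih (n + 2) (by omega), ← ih (n + 1) (by omega), ← ih n (by omega)]
        exact_mod_cast ncard_OSC_add_three n
  exact fun m _ => h_ncard m

theorem stmt5 (f : ℤ → ℚ)
    (hb2 : f (-2) = 1 / 36) (hb1 : f (-1) = 1 / 6) (hb0 : f 0 = 1) (hb : f 1 = 8)
    (hrec : ∀ k : ℤ, 2 ≤ k → f k = 8 * f (k - 1) - f (k - 2) + 6 * f (k - 3)) :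
    ∀ m : ℕ, 1 ≤ m → ((OSC m).ncard : ℚ) = f m :=
  stmt5_general f hb1 hb0 hb hrec
end

section
/- Fix m ≥ 1 and let f : ℤ → ℚ be defined by f(−2) = 1/36, f(−1) = 1/6, f(0) = 1, f(1) = 8, and f(k) = 8f(k−1) − f(k−2) + 6f(k−3) for k ≥ 2. Let c = c_{m−1} ... c_0 be a codeword of OSC(m), with symbols viewed as natural numbers in {0,...,7}. For 0 ≤ i ≤ m−1 define: y_{i,1} = 1 if i+2 ≤ m−1, c_{i+2} = 0, c_{i+1} = 2, and c_i ≠ 0, and y_{i,1} = 0 otherwise; y_{i,2} = 1 if i+1 ≤ m−1 and either (c_{i+1} = 0 and c_i ∈ {3,4,5,6,7}) or (c_{i+1} = 7 and c_i ∈ {6,7}), and y_{i,2} = 0 otherwise; θ_i = 1 if c_i ≠ 0 and θ_i = 0 otherwise. Then the lexicographic index g(c) of c in OSC(m) satisfies, as an equality of rational numbers, g(c) = Σ_{i=0}^{m−1} [ (c_i − y_{i,1} − (1/2)y_{i,2}) · f(i) + θ_i (1 − y_{i,1}) ( (3y_{i,2} − 1/2) · f(i−1) + 3 f(i−2) ) ].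 -/
/-- The natural-number value of symbol `c_i`, with an out-of-alphabet default
for out-of-range indices. -/
def extVal {m q : ℕ} (c : Fin m → Fin q) (i : ℕ) : ℕ :=
  if h : i < m then (c ⟨i, h⟩ : ℕ) else q

/-- `y_{i,1} = 1` iff `i+2 ≤ m-1`, `c_{i+2} = 0`, `c_{i+1} = 2`, and `c_i ≠ 0`. -/
def osY1 {m : ℕ} (c : Fin m → Fin 8) (i : ℕ) : ℚ :=
  if i + 2 < m ∧ extVal c (i + 2) = 0 ∧ extVal c (i + 1) = 2 ∧ extVal c i ≠ 0 then 1 else 0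

/-- `y_{i,2} = 1` iff `i+1 ≤ m-1` and either (`c_{i+1} = 0` and `c_i ∈ {3,...,7}`)
or (`c_{i+1} = 7` and `c_i ∈ {6,7}`). -/
def osY2 {m : ℕ} (c : Fin m → Fin 8) (i : ℕ) : ℚ :=
  if i + 1 < m ∧ ((extVal c (i + 1) = 0 ∧ extVal c i ∈ ({3, 4, 5, 6, 7} : Finset ℕ)) ∨
      (extVal c (i + 1) = 7 ∧ extVal c i ∈ ({6, 7} : Finset ℕ))) then 1 else 0

/-- `θ_i = 1` iff `c_i ≠ 0`. -/
def osTheta {m : ℕ} (c : Fin m → Fin 8) (i : ℕ) : ℚ :=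
  if extVal c i ≠ 0 then 1 else 0

/-!
A word `w` below `c` is determined by the most significant position `i` where it differs from
`c`, its symbol `t < c_i` there, and its `i` lowest symbols. Both forbidden patterns have width
three, so the lowest `i` symbols can be chosen in a number of ways that depends only on the two
symbols `c_{i+1} t` above them, provided the window `c_{i+2} c_{i+1} t` is admissible. There are
three such counts: `B_i` after a prefix `0 2` or `7 5` of a forbidden pattern, `C_i` after a
symbol `0` or `7`, and `A_i` otherwise. Splitting on the next symbol gives the recurrence
`A_{k+1} = 6A_k + 2C_k`, `C_{k+1} = 5A_k + 2C_k + B_k`, `B_{k+1} = 6A_k + C_k`, which is solved by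
`A_k = f(k)`, `C_k = f(k) - f(k-1)/2 + 3f(k-2)`, `B_k = f(k)/2 + 3f(k-1)`; summing these over
`t < c_i` gives the `i`-th summand.
-/

open Finset

theorem card_filter_lt_eq_sum {ι α : Type*} [Fintype ι] [Fintype α] [LinearOrder α]
    (p : ι → Prop) [DecidablePred p] (f : ι → α) (a : α) :
    #{x | p x ∧ f x < a} = ∑ t with t < a, #{x | p x ∧ f x = t} := by
  rw [card_eq_sum_card_fiberwise (f := f) (t := {t | t < a})]
  · refine sum_congr rfl fun t ht => ?_
    rw [filter_filter]
    congr 1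
    ext x
    simp only [mem_filter, mem_univ, true_and] at ht ⊢
    constructor
    · rintro ⟨⟨hp, -⟩, rfl⟩
      exact ⟨hp, rfl⟩
    · rintro ⟨hp, rfl⟩
      exact ⟨⟨hp, ht⟩, rfl⟩
  · intro x hx
    simp only [coe_filter, mem_univ, true_and, Set.mem_ofPred_eq] at hx ⊢
    exact hx.2

open scoped Classical in
theorem lexIndex_eq_sum_sum {m q : ℕ} (C : Set (Fin m → Fin q)) (c : Fin m → Fin q) :
    lexIndex C c = ∑ i : Fin m, ∑ t with t < c i,
      #{w | w ∈ C ∧ (∀ j, i < j → w j = c j) ∧ w i = t} := by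
  have hunion : {w ∈ C | wordLT w c} =
      ↑(univ.biUnion fun i : Fin m => {w | w ∈ C ∧ (∀ j, i < j → w j = c j) ∧ w i < c i}) := by
    ext w
    simp only [Set.mem_ofPred_eq, wordLT, coe_biUnion, coe_filter, mem_coe, mem_univ,
      Set.iUnion_true, Set.mem_iUnion, true_and]
    constructor
    · rintro ⟨hC, k, hlt, hup⟩
      exact ⟨k, hC, hup, hlt⟩
    · rintro ⟨k, hC, hup, hlt⟩
      exact ⟨hC, k, hlt, hup⟩
  rw [lexIndex, hunion, Set.ncard_coe_finset, card_biUnion]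
  · simp only [← and_assoc]
    exact sum_congr rfl fun i _ => card_filter_lt_eq_sum _ (fun w : Fin m → Fin q => w i) (c i)
  · intro i _ i' _ hii'
    refine disjoint_filter.2 fun w _ ⟨_, hi, hwi⟩ ⟨_, hi', hwi'⟩ => ?_
    rcases hii'.lt_or_gt with h | h
    · exact (hi i' h ▸ hwi').false
    · exact (hi' i h ▸ hwi).false

theorem card_filter_eq_sum_card_filter_snoc {α : Type*} [Fintype α] {k : ℕ}
    (Q : (Fin (k + 1) → α) → Prop) [DecidablePred Q] :
    #{x | Q x} = ∑ t : α, #{y : Fin k → α | Q (Fin.snoc y t)} := by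
  simp only [card_filter]
  rw [← (Fin.snocEquiv fun _ => α).sum_comp, Fintype.sum_prod_type]
  rfl

section Windows

/-! Words are read as sequences `ℕ → ℕ` through `extVal`; a code is given by the predicate `P`
on its windows `g (j + 2), g (j + 1), g j`. -/

variable {q : ℕ} (P : ℕ → ℕ → ℕ → Prop)

def SatisfiesWindowsBelow (k : ℕ) (g : ℕ → ℕ) : Prop :=
  ∀ j < k, P (g (j + 2)) (g (j + 1)) (g j)

def SatisfiesWindows (g : ℕ → ℕ) : Prop :=
  ∀ j, P (g (j + 2)) (g (j + 1)) (g j)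

def splice {k : ℕ} (x : Fin k → Fin q) (g : ℕ → ℕ) : ℕ → ℕ :=
  fun j => if h : j < k then x ⟨j, h⟩ else g j

theorem splice_of_le {k : ℕ} (x : Fin k → Fin q) (g : ℕ → ℕ) {j : ℕ} (hj : k ≤ j) :
    splice x g j = g j :=
  dif_neg hj.not_gt

theorem splice_snoc {k : ℕ} (y : Fin k → Fin q) (t : Fin q) (g : ℕ → ℕ) :
    splice (Fin.snoc y t : Fin (k + 1) → Fin q) g = splice y (Function.update g k t) := by
  funext j
  rcases lt_trichotomy j k with h | rfl | h
  · simp [splice, h, Nat.lt_succ_of_lt h, Fin.snoc]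
  · simp [splice, Fin.snoc]
  · simp [splice, h.not_gt, (Nat.succ_le_of_lt h).not_gt, h.ne']

theorem satisfiesWindows_splice_iff {k : ℕ} (x : Fin k → Fin q) (g : ℕ → ℕ) :
    SatisfiesWindows P (splice x g) ↔
      SatisfiesWindowsBelow P k (splice x g) ∧ ∀ j, k ≤ j → P (g (j + 2)) (g (j + 1)) (g j) := by
  refine ⟨fun h => ⟨fun j _ => h j, fun j hj => ?_⟩, fun ⟨hlow, hhigh⟩ j => ?_⟩
  · simpa only [splice_of_le x g (by omega : k ≤ j), splice_of_le x g (by omega : k ≤ j + 1),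
      splice_of_le x g (by omega : k ≤ j + 2)] using h j
  · rcases lt_or_ge j k with hj | hj
    · exact hlow j hj
    · simpa only [splice_of_le x g (by omega : k ≤ j), splice_of_le x g (by omega : k ≤ j + 1),
        splice_of_le x g (by omega : k ≤ j + 2)] using hhigh j hj

variable (q) in
open scoped Classical in
/-- The number of admissible fillings of the `k` lowest positions of `g`; it depends on `g` only
through `g k` and `g (k + 1)`. -/
noncomputable def fillCount (g : ℕ → ℕ) (k : ℕ) : ℕ :=
  #{x : Fin k → Fin q | SatisfiesWindowsBelow P k (splice x g)}

theorem fillCount_zero (g : ℕ → ℕ) : fillCount q P g 0 = 1 := by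
  simp [fillCount, SatisfiesWindowsBelow]

open scoped Classical in
theorem fillCount_succ (g : ℕ → ℕ) (k : ℕ) :
    fillCount q P g (k + 1) = ∑ t : Fin q,
      if P (g (k + 2)) (g (k + 1)) t then fillCount q P (Function.update g k t) k else 0 := by
  rw [fillCount, card_filter_eq_sum_card_filter_snoc]
  refine sum_congr rfl fun t _ => ?_
  have hwin : ∀ y : Fin k → Fin q, SatisfiesWindowsBelow P (k + 1) (splice (Fin.snoc y t) g) ↔
      SatisfiesWindowsBelow P k (splice y (Function.update g k t)) ∧
        P (g (k + 2)) (g (k + 1)) t := by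
    intro y
    rw [splice_snoc, SatisfiesWindowsBelow, Nat.forall_lt_succ_right]
    simp [splice, SatisfiesWindowsBelow]
  split_ifs with hP
  · simp only [hwin, hP, and_true, fillCount]
  · simp [hwin, hP]

theorem satisfiesWindows_splice_update_iff {g : ℕ → ℕ} (hg : SatisfiesWindows P g) {k : ℕ}
    (x : Fin k → Fin q) (t : ℕ) :
    SatisfiesWindows P (splice x (Function.update g k t)) ↔
      P (g (k + 2)) (g (k + 1)) t ∧
        SatisfiesWindowsBelow P k (splice x (Function.update g k t)) := by
  rw [satisfiesWindows_splice_iff, and_comm]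
  refine and_congr_left fun _ => ⟨fun h => by simpa using h k le_rfl, fun h j hj => ?_⟩
  rcases hj.eq_or_lt with rfl | hj
  · simpa using h
  · simpa [hj.ne', (hj.trans (Nat.lt_succ_self j)).ne', (hj.trans (by omega : j < j + 2)).ne']
      using hg j

end Windows

section Fibres

variable {m q : ℕ}

theorem extVal_of_lt (c : Fin m → Fin q) {j : ℕ} (hj : j < m) : extVal c j = c ⟨j, hj⟩ :=
  dif_pos hj

theorem extVal_of_ge (c : Fin m → Fin q) {j : ℕ} (hj : m ≤ j) : extVal c j = q :=
  dif_neg hj.not_gt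

theorem extVal_coe (c : Fin m → Fin q) (i : Fin m) : extVal c i = c i :=
  extVal_of_lt c i.isLt

theorem lt_of_extVal_lt {c : Fin m → Fin q} {j : ℕ} (h : extVal c j < q) : j < m := by
  by_contra hj
  exact (extVal_of_ge c (not_lt.1 hj) ▸ h).false

def spliceWord {k : ℕ} (x : Fin k → Fin q) (d : Fin m → Fin q) : Fin m → Fin q :=
  fun j => if h : (j : ℕ) < k then x ⟨j, h⟩ else d j

theorem extVal_eq_splice {c w : Fin m → Fin q} {i : Fin m} {t : Fin q}
    (hup : ∀ j, i < j → w j = c j) (hwi : w i = t) :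
    extVal w = splice (fun j : Fin i => w (Fin.castLE i.isLt.le j))
      (Function.update (extVal c) i t) := by
  funext j
  rcases lt_trichotomy j i with h | rfl | h
  · simp [splice, extVal, h, h.trans i.isLt, Fin.castLE]
  · simp [splice, extVal, ← hwi]
  · simp only [splice, extVal, h.not_gt, h.ne', dite_false, ne_eq, not_false_eq_true,
      Function.update_of_ne]
    split_ifs with hm
    · exact congrArg _ (hup ⟨j, hm⟩ h)
    · rfl

open scoped Classical in
theorem card_filter_agree_eq (Q : (ℕ → ℕ) → Prop) (c : Fin m → Fin q) (i : Fin m) (t : Fin q) :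
    #{w : Fin m → Fin q | Q (extVal w) ∧ (∀ j, i < j → w j = c j) ∧ w i = t} =
      #{x : Fin i → Fin q | Q (splice x (Function.update (extVal c) i t))} := by
  refine card_nbij' (fun w j => w (Fin.castLE i.isLt.le j))
    (fun x => spliceWord x (Function.update c i t)) ?_ ?_ ?_ ?_
  · intro w hw
    simp only [coe_filter, mem_univ, true_and, Set.mem_ofPred_eq] at hw ⊢
    rw [← extVal_eq_splice hw.2.1 hw.2.2]
    exact hw.1
  · intro x hx
    simp only [coe_filter, mem_univ, true_and, Set.mem_ofPred_eq] at hx ⊢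
    have hup : ∀ j, i < j → spliceWord x (Function.update c i t) j = c j := fun j hj => by
      simp [spliceWord, (Fin.lt_def.1 hj).not_gt, hj.ne']
    have hwi : spliceWord x (Function.update c i t) i = t := by
      simp [spliceWord]
    refine ⟨?_, hup, hwi⟩
    rw [extVal_eq_splice hup hwi]
    convert hx using 4 with j
    simp [spliceWord, Fin.castLE, j.isLt]
  · intro w hw
    simp only [coe_filter, mem_univ, true_and, Set.mem_ofPred_eq] at hw
    funext j
    rcases lt_trichotomy (j : ℕ) i with h | h | h
    · simp [spliceWord, h, Fin.castLE]
    · obtain rfl : j = i := Fin.ext h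
      simp [spliceWord, hw.2.2]
    · simp [spliceWord, h.not_gt, Fin.ne_of_gt (Fin.lt_def.2 h), hw.2.1 j (Fin.lt_def.2 h)]
  · intro x _
    funext j
    simp [spliceWord, Fin.castLE, j.isLt]

open scoped Classical in
theorem card_filter_agree_eq_fillCount (P : ℕ → ℕ → ℕ → Prop) {c : Fin m → Fin q}
    (hc : SatisfiesWindows P (extVal c)) (i : Fin m) (t : Fin q) :
    #{w : Fin m → Fin q | SatisfiesWindows P (extVal w) ∧ (∀ j, i < j → w j = c j) ∧ w i = t} =
      if P (extVal c (i + 2)) (extVal c (i + 1)) t then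
        fillCount q P (Function.update (extVal c) i t) i else 0 := by
  rw [card_filter_agree_eq]
  simp only [satisfiesWindows_splice_update_iff P hc]
  split_ifs with hP <;> simp [hP, fillCount]

end Fibres

def osAdmissible (b a t : ℕ) : Prop :=
  ¬(b = 0 ∧ a = 2 ∧ t = 0) ∧ ¬(b = 7 ∧ a = 5 ∧ t = 7)

/-- The sentinel `8` that `extVal` places beyond the word never occurs in a forbidden window. -/
theorem mem_OSC_iff {m : ℕ} (c : Fin m → Fin 8) :
    c ∈ OSC m ↔ SatisfiesWindows osAdmissible (extVal c) := by
  have hwin : ∀ j (hj : j + 2 < m),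
      osAdmissible (extVal c (j + 2)) (extVal c (j + 1)) (extVal c j) ↔
        ¬(c ⟨j + 2, hj⟩ = 0 ∧ c ⟨j + 1, by omega⟩ = 2 ∧ c ⟨j, by omega⟩ = 0) ∧
        ¬(c ⟨j + 2, hj⟩ = 7 ∧ c ⟨j + 1, by omega⟩ = 5 ∧ c ⟨j, by omega⟩ = 7) := fun j hj => by
    rw [extVal_of_lt c hj, extVal_of_lt c (by omega), extVal_of_lt c (by omega)]
    simp only [osAdmissible, Fin.ext_iff]
    rfl
  refine ⟨fun h j => ?_, fun h j hj => (hwin j hj).1 (h j)⟩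
  by_cases hj : j + 2 < m
  · exact (hwin j hj).2 (h j hj)
  · rw [extVal_of_ge c (by omega)]
    simp [osAdmissible]

/-- The closed form of `fillCount 8 osAdmissible g k` with `F₀, F₁, F₂ = f k, f (k-1), f (k-2)`,
`b = g (k + 1)` and `a = g k`: the counts `B_k`, `C_k`, `A_k` of the three classes of contexts. -/
def tailWeight (F₀ F₁ F₂ : ℚ) (b a : ℕ) : ℚ :=
  if (b = 0 ∧ a = 2) ∨ (b = 7 ∧ a = 5) then F₀ / 2 + 3 * F₁
  else if a = 0 ∨ a = 7 then F₀ - F₁ / 2 + 3 * F₂ else F₀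

open scoped Classical in
theorem tailWeight_step (F₀ F₁ F₂ : ℚ) (b a : ℕ) :
    tailWeight (8 * F₀ - F₁ + 6 * F₂) F₀ F₁ b a =
      ∑ t : Fin 8, if osAdmissible b a t then tailWeight F₀ F₁ F₂ a t else 0 := by
  rw [Fin.sum_univ_eight]
  by_cases h₁ : b = 0 ∧ a = 2
  · obtain ⟨rfl, rfl⟩ := h₁
    norm_num [tailWeight, osAdmissible]
    ring
  by_cases h₂ : b = 7 ∧ a = 5
  · obtain ⟨rfl, rfl⟩ := h₂
    norm_num [tailWeight, osAdmissible]
    ring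
  have hadm : ∀ t, osAdmissible b a t := fun t =>
    ⟨fun h => h₁ ⟨h.1, h.2.1⟩, fun h => h₂ ⟨h.1, h.2.1⟩⟩
  simp only [hadm, if_true, tailWeight, h₁, h₂, false_or, if_false]
  by_cases h₃ : a = 0
  · subst h₃
    norm_num
    ring
  by_cases h₄ : a = 7
  · subst h₄
    norm_num
    ring
  · norm_num [h₃, h₄]
    ring

theorem fillCount_osAdmissible (f : ℤ → ℚ) (h₀ : f 0 = 1) (h₁ : f (-1) = 1 / 6)
    (h₂ : f (-2) = 1 / 36) (hrec : ∀ k : ℕ, f (k + 1) = 8 * f k - f (k - 1) + 6 * f (k - 2))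
    (g : ℕ → ℕ) (k : ℕ) :
    (fillCount 8 osAdmissible g k : ℚ) =
      tailWeight (f k) (f (k - 1)) (f (k - 2)) (g (k + 1)) (g k) := by
  induction k generalizing g with
  | zero =>
    rw [fillCount_zero]
    norm_num [tailWeight, h₀, h₁, h₂]
  | succ k ih =>
    have e₁ : ((k + 1 : ℕ) : ℤ) - 1 = k := by push_cast; ring
    have e₂ : ((k + 1 : ℕ) : ℤ) - 2 = k - 1 := by push_cast; ring
    rw [fillCount_succ, e₁, e₂, Nat.cast_add_one, hrec k, tailWeight_step, Nat.cast_sum]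
    refine sum_congr rfl fun t _ => ?_
    rw [Nat.cast_ite, Nat.cast_zero, ih]
    simp

open scoped Classical in
theorem sum_tailWeight_lt (F₀ F₁ F₂ y₁ y₂ θ : ℚ) (b a : ℕ) (v : Fin 8)
    (hy₁ : y₁ = if b = 0 ∧ a = 2 ∧ (v : ℕ) ≠ 0 then 1 else 0)
    (hy₂ : y₂ = if (a = 0 ∧ (v : ℕ) ∈ ({3, 4, 5, 6, 7} : Finset ℕ)) ∨
      (a = 7 ∧ (v : ℕ) ∈ ({6, 7} : Finset ℕ)) then 1 else 0)
    (hθ : θ = if (v : ℕ) ≠ 0 then 1 else 0) :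
    ∑ t with t < v, (if osAdmissible b a t then tailWeight F₀ F₁ F₂ a t else 0) =
      ((v : ℚ) - y₁ - 1 / 2 * y₂) * F₀ + θ * (1 - y₁) * ((3 * y₂ - 1 / 2) * F₁ + 3 * F₂) := by
  subst hy₁ hy₂ hθ
  obtain ⟨v, hv⟩ := v
  rw [sum_filter, Fin.sum_univ_eight]
  simp only [Fin.lt_def]
  by_cases h₁ : b = 0 ∧ a = 2
  · obtain ⟨rfl, rfl⟩ := h₁
    interval_cases v <;> norm_num [osAdmissible, tailWeight] <;> ring
  by_cases h₂ : b = 7 ∧ a = 5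
  · obtain ⟨rfl, rfl⟩ := h₂
    interval_cases v <;> norm_num [osAdmissible, tailWeight] <;> ring
  have hadm : ∀ t, osAdmissible b a t := fun t =>
    ⟨fun h => h₁ ⟨h.1, h.2.1⟩, fun h => h₂ ⟨h.1, h.2.1⟩⟩
  have hy₁ : ¬(b = 0 ∧ a = 2 ∧ v ≠ 0) := fun h => h₁ ⟨h.1, h.2.1⟩
  simp only [hadm, if_true, tailWeight, if_false, hy₁]
  by_cases h₃ : a = 0
  · subst h₃
    interval_cases v <;> norm_num <;> ring
  by_cases h₄ : a = 7
  · subst h₄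
    interval_cases v <;> norm_num <;> ring
  · interval_cases v <;> norm_num [h₃, h₄] <;> ring

theorem osY1_eq {m : ℕ} (c : Fin m → Fin 8) (i : Fin m) :
    osY1 c i = if extVal c (i + 2) = 0 ∧ extVal c (i + 1) = 2 ∧ (c i : ℕ) ≠ 0 then 1 else 0 := by
  rw [osY1, extVal_coe]
  exact if_congr ⟨fun h => h.2, fun h => ⟨lt_of_extVal_lt (c := c) (by omega), h⟩⟩ rfl rfl

theorem osY2_eq {m : ℕ} (c : Fin m → Fin 8) (i : Fin m) :
    osY2 c i = if (extVal c (i + 1) = 0 ∧ (c i : ℕ) ∈ ({3, 4, 5, 6, 7} : Finset ℕ)) ∨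
      (extVal c (i + 1) = 7 ∧ (c i : ℕ) ∈ ({6, 7} : Finset ℕ)) then 1 else 0 := by
  rw [osY2, extVal_coe]
  refine if_congr ⟨fun h => h.2, fun h => ⟨lt_of_extVal_lt (c := c) ?_, h⟩⟩ rfl rfl
  rcases h with h | h <;> omega

theorem osTheta_eq {m : ℕ} (c : Fin m → Fin 8) (i : Fin m) :
    osTheta c i = if (c i : ℕ) ≠ 0 then 1 else 0 := by
  rw [osTheta, extVal_coe]

theorem stmt6_general (m : ℕ) (f : ℤ → ℚ)
    (hb2 : f (-2) = 1 / 36) (hb1 : f (-1) = 1 / 6) (hb0 : f 0 = 1) (hb : f 1 = 8)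
    (hrec : ∀ k : ℤ, 2 ≤ k → f k = 8 * f (k - 1) - f (k - 2) + 6 * f (k - 3))
    (c : Fin m → Fin 8) (hc : c ∈ OSC m) :
    (lexIndex (OSC m) c : ℚ) =
      ∑ i : Fin m,
        ((((c i : ℕ) : ℚ) - osY1 c (i : ℕ) - (1 / 2) * osY2 c (i : ℕ)) * f ((i : ℕ) : ℤ)
          + osTheta c (i : ℕ) * (1 - osY1 c (i : ℕ)) *
              ((3 * osY2 c (i : ℕ) - 1 / 2) * f (((i : ℕ) : ℤ) - 1)
                + 3 * f (((i : ℕ) : ℤ) - 2))) := by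
  classical
  have hrec' : ∀ k : ℕ, f (k + 1) = 8 * f k - f (k - 1) + 6 * f (k - 2) := by
    rintro (_ | k)
    · norm_num [hb, hb0, hb1, hb2]
    · convert hrec (k + 2) (by omega) using 2 <;> push_cast <;> ring_nf
  rw [lexIndex_eq_sum_sum, Nat.cast_sum]
  refine sum_congr rfl fun i _ => ?_
  rw [Nat.cast_sum, ← sum_tailWeight_lt _ _ _ _ _ _ (extVal c (i + 2)) (extVal c (i + 1)) (c i)
    (osY1_eq c i) (osY2_eq c i) (osTheta_eq c i)]
  refine sum_congr rfl fun t _ => ?_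
  simp_rw [mem_OSC_iff]
  rw [card_filter_agree_eq_fillCount _ ((mem_OSC_iff c).1 hc), Nat.cast_ite, Nat.cast_zero,
    fillCount_osAdmissible f hb0 hb1 hb2 hrec']
  simp

theorem stmt6 (m : ℕ) (hm : 1 ≤ m) (f : ℤ → ℚ)
    (hb2 : f (-2) = 1 / 36) (hb1 : f (-1) = 1 / 6) (hb0 : f 0 = 1) (hb : f 1 = 8)
    (hrec : ∀ k : ℤ, 2 ≤ k → f k = 8 * f (k - 1) - f (k - 2) + 6 * f (k - 3))
    (c : Fin m → Fin 8) (hc : c ∈ OSC m) :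
    (lexIndex (OSC m) c : ℚ) =
      ∑ i : Fin m,
        ((((c i : ℕ) : ℚ) - osY1 c (i : ℕ) - (1 / 2) * osY2 c (i : ℕ)) * f ((i : ℕ) : ℤ)
          + osTheta c (i : ℕ) * (1 - osY1 c (i : ℕ)) *
              ((3 * osY2 c (i : ℕ) - 1 / 2) * f (((i : ℕ) : ℤ) - 1)
                + 3 * f (((i : ℕ) : ℤ) - 2))) :=
  stmt6_general m f hb2 hb1 hb0 hb hrec c hc
end

section
/- Let N(m) denote the cardinality of the OS-LOCO code OSC(m). There exists a unique real number λ with λ³ = 8λ² − λ + 6; this λ satisfies 7 < λ < 8, and (N(m))^{1/m} → λ as m → ∞. (Hence the capacity of the OS-LOCO constraint is log₂ λ ≈ 2.9944 input bits per coded symbol.) -/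
/-!
Classify an admissible word by its first two letters `c 0, c 1` into three states: it starts
with `2 0` or `5 7` (exactly one letter cannot be prepended), it starts with `0` or `7`, or
neither. Prepending a letter acts on the vector of state counts by the nonnegative matrix
`!![0, 1, 0; 1, 2, 2; 6, 5, 6]`, whose characteristic polynomial is `x³ - 8x² + x - 6` and which
has the positive eigenvector `(1, λ, (λ² - 2λ - 1)/2)` for its root `λ ∈ (7, 8)`. The count
vector `(2, 16, 46)` of words of length two lies between one and three times this eigenvector, and
a nonnegative matrix preserves such a sandwich, so `N(m)` is within constant factors of `λ ^ m`.
-/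

open Finset Matrix Filter Topology

theorem Fin.card_filter_cons {α : Type*} [Fintype α] {n : ℕ} (P : (Fin (n + 1) → α) → Prop)
    [DecidablePred P] :
    #{c | P c} = ∑ c : Fin n → α, #{s | P (Fin.cons s c)} := by
  simp only [card_filter]
  rw [← (Fin.consEquiv fun _ => α).sum_comp, Fintype.sum_prod_type, Finset.sum_comm]
  rfl

section NonnegRecurrence

variable {ι : Type*} [Fintype ι] {A : Matrix ι ι ℝ} {e : ι → ℝ} {r c : ℝ} {x : ℕ → ι → ℝ}

theorem Matrix.mulVec_mono_of_nonneg (hA : ∀ i j, 0 ≤ A i j) {v w : ι → ℝ} (h : v ≤ w) :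
    A *ᵥ v ≤ A *ᵥ w :=
  fun i => sum_le_sum fun j _ => mul_le_mul_of_nonneg_left (h j) (hA i j)

theorem le_smul_of_mulVec_recurrence (hA : ∀ i j, 0 ≤ A i j) (he : A *ᵥ e = r • e)
    (hx : ∀ n, x (n + 1) = A *ᵥ x n) (h0 : x 0 ≤ c • e) (n : ℕ) : x n ≤ (c * r ^ n) • e := by
  induction n with
  | zero => simpa using h0
  | succ n ih =>
    calc x (n + 1) = A *ᵥ x n := hx n
      _ ≤ A *ᵥ ((c * r ^ n) • e) := mulVec_mono_of_nonneg hA ih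
      _ = (c * r ^ (n + 1)) • e := by rw [mulVec_smul, he, smul_smul, pow_succ, mul_assoc]

theorem smul_le_of_mulVec_recurrence (hA : ∀ i j, 0 ≤ A i j) (he : A *ᵥ e = r • e)
    (hx : ∀ n, x (n + 1) = A *ᵥ x n) (h0 : c • e ≤ x 0) (n : ℕ) : (c * r ^ n) • e ≤ x n := by
  have := le_smul_of_mulVec_recurrence (x := -x) (c := -c) hA he
    (fun n => by rw [Pi.neg_apply, Pi.neg_apply, hx, mulVec_neg]) (by simpa [neg_smul] using h0) n
  simpa [neg_mul, neg_smul] using this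

end NonnegRecurrence

theorem tendsto_rpow_one_div_of_le_of_le {u : ℕ → ℝ} {r a b : ℝ} (hr : 0 < r) (ha : 0 < a)
    (hb : 0 < b) (hlow : ∀ᶠ m in atTop, a * r ^ m ≤ u m) (hupp : ∀ᶠ m in atTop, u m ≤ b * r ^ m) :
    Tendsto (fun m : ℕ => u m ^ (1 / (m : ℝ))) atTop (𝓝 r) := by
  have hgeom {k : ℝ} (hk : 0 < k) :
      Tendsto (fun m : ℕ => (k * r ^ m) ^ (1 / (m : ℝ))) atTop (𝓝 r) := by
    have hk1 : Tendsto (fun m : ℕ => k ^ (1 / (m : ℝ)) * r) atTop (𝓝 r) := by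
      simpa using (tendsto_const_nhds.rpow tendsto_one_div_atTop_nhds_zero_nat
        (Or.inl hk.ne')).mul_const r
    refine hk1.congr' ?_
    filter_upwards [eventually_ne_atTop 0] with m hm
    rw [Real.mul_rpow hk.le (by positivity), ← Real.rpow_natCast, ← Real.rpow_mul hr.le,
      mul_one_div_cancel (Nat.cast_ne_zero.2 hm), Real.rpow_one]
  refine tendsto_of_tendsto_of_tendsto_of_le_of_le' (hgeom ha) (hgeom hb) ?_ ?_
  · filter_upwards [hlow] with m hm
    exact Real.rpow_le_rpow (by positivity) hm (by positivity)
  · filter_upwards [hlow, hupp] with m hm hm'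
    exact Real.rpow_le_rpow ((by positivity : (0 : ℝ) ≤ a * r ^ m).trans hm) hm' (by positivity)

namespace OSC

abbrev Admissible (a b c : Fin 8) : Prop :=
  ¬(a = 0 ∧ b = 2 ∧ c = 0) ∧ ¬(a = 7 ∧ b = 5 ∧ c = 7)

theorem cons_mem_iff {n : ℕ} (s : Fin 8) (c : Fin (n + 2) → Fin 8) :
    (Fin.cons s c : Fin (n + 3) → Fin 8) ∈ OSC (n + 3) ↔
      Admissible (c 1) (c 0) s ∧ c ∈ OSC (n + 2) := by
  constructor
  · intro h
    have h0 := h 0 (by omega)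
    exact ⟨h0, fun i hi => h (i + 1) (by omega)⟩
  · rintro ⟨h0, h⟩ (_ | i) hi
    exacts [h0, h i (by omega)]

theorem mem_two (c : Fin 2 → Fin 8) : c ∈ OSC 2 := fun _ h => absurd h (by omega)

/-- The state of a word whose first two letters are `a`, `b`: `0` if one letter cannot be
prepended, `1` if `a` can begin a forbidden window, `2` otherwise. -/
def state (a b : Fin 8) : Fin 3 :=
  if (a = 2 ∧ b = 0) ∨ (a = 5 ∧ b = 7) then 0 else if a = 0 ∨ a = 7 then 1 else 2

def transfer : Matrix (Fin 3) (Fin 3) ℕ := !![0, 1, 0; 1, 2, 2; 6, 5, 6]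

theorem card_admissible_state (a b : Fin 8) (i : Fin 3) :
    #{s | Admissible b a s ∧ state s a = i} = transfer i (state a b) := by
  revert a b i; decide

open Classical in
noncomputable def stateCount (n : ℕ) (i : Fin 3) : ℕ :=
  #{c : Fin (n + 2) → Fin 8 | c ∈ OSC (n + 2) ∧ state (c 0) (c 1) = i}

theorem stateCount_zero : stateCount 0 = ![2, 16, 46] := by
  ext i
  have h (c : Fin (0 + 2) → Fin 8) : c ∈ OSC (0 + 2) := mem_two c
  simp only [stateCount, h, true_and]
  revert i; decide

theorem stateCount_succ (n : ℕ) : stateCount (n + 1) = transfer *ᵥ stateCount n := by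
  classical
  ext i
  calc stateCount (n + 1) i
      = ∑ c : Fin (n + 2) → Fin 8, #{s | Fin.cons s c ∈ OSC (n + 3) ∧ state s (c 0) = i} := by
        rw [stateCount, Fin.card_filter_cons]; simp
    _ = ∑ c with c ∈ OSC (n + 2), transfer i (state (c 0) (c 1)) := by
        rw [sum_filter]
        refine sum_congr rfl fun c _ => ?_
        simp only [cons_mem_iff, and_right_comm (b := c ∈ OSC (n + 2))]
        split_ifs with hc
        · simpa [hc] using card_admissible_state (c 0) (c 1) i
        · simp [hc]
    _ = ∑ j, transfer i j * stateCount n j := by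
        rw [← sum_fiberwise _ (fun c => state (c 0) (c 1))]
        refine sum_congr rfl fun j _ => ?_
        rw [stateCount, filter_filter, mul_comm, ← smul_eq_mul, ← sum_const]
        exact sum_congr rfl fun c hc => by rw [(mem_filter.1 hc).2.2]

theorem ncard_eq_sum_stateCount (n : ℕ) : (OSC (n + 2)).ncard = ∑ i, stateCount n i := by
  classical
  rw [Set.ncard_eq_toFinset_card', ← Set.filter_mem_univ_eq_toFinset,
    card_eq_sum_card_fiberwise (f := fun c => state (c 0) (c 1)) (t := univ)
      (fun _ _ => mem_univ _)]
  simp only [stateCount, filter_filter]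

variable {lam : ℝ}

theorem seven_lt_of_charEq (hlam : lam ^ 3 = 8 * lam ^ 2 - lam + 6) : 7 < lam := by
  by_contra! h
  nlinarith [sq_nonneg lam, sq_nonneg (2 * lam - 1),
    mul_nonneg (sq_nonneg lam) (by linarith : (0 : ℝ) ≤ 7 - lam)]

theorem lt_eight_of_charEq (hlam : lam ^ 3 = 8 * lam ^ 2 - lam + 6) : lam < 8 := by
  by_contra! h
  nlinarith [mul_nonneg (sq_nonneg lam) (by linarith : (0 : ℝ) ≤ lam - 8)]

theorem existsUnique_charEq : ∃! lam : ℝ, lam ^ 3 = 8 * lam ^ 2 - lam + 6 := by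
  obtain ⟨lam, -, hlam⟩ := intermediate_value_Icc (by norm_num : (7 : ℝ) ≤ 8)
    (f := fun x : ℝ => x ^ 3 - 8 * x ^ 2 + x - 6) (by fun_prop)
    (by norm_num : (0 : ℝ) ∈ Set.Icc _ _)
  replace hlam : lam ^ 3 = 8 * lam ^ 2 - lam + 6 := by linarith
  refine ⟨lam, hlam, fun y hy => ?_⟩
  have := seven_lt_of_charEq hy; have := lt_eight_of_charEq hy
  have := seven_lt_of_charEq hlam; have := lt_eight_of_charEq hlam
  have hfactor : (y - lam) * (y ^ 2 + y * lam + lam ^ 2 - 8 * (y + lam) + 1) = 0 := by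
    linear_combination hy - hlam
  have hpos : 0 < y ^ 2 + y * lam + lam ^ 2 - 8 * (y + lam) + 1 := by nlinarith
  linarith [(mul_eq_zero.1 hfactor).resolve_right hpos.ne']

noncomputable def perronVector (lam : ℝ) : Fin 3 → ℝ := ![1, lam, (lam ^ 2 - 2 * lam - 1) / 2]

theorem transfer_mulVec_perronVector (hlam : lam ^ 3 = 8 * lam ^ 2 - lam + 6) :
    transfer.map (↑) *ᵥ perronVector lam = lam • perronVector lam := by
  ext i
  fin_cases i <;>
    simp only [transfer, perronVector, mulVec, dotProduct, Fin.sum_univ_three, map_apply, of_apply,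
      cons_val', cons_val_fin_one, cons_val_zero, cons_val_one, Matrix.cons_val, Fin.isValue,
      Fin.zero_eta, Fin.mk_one, Fin.reduceFinMk, Pi.smul_apply, smul_eq_mul, Nat.cast_zero,
      Nat.cast_one, Nat.cast_ofNat] <;>
    linarith

theorem sum_smul_perronVector (k : ℝ) :
    ∑ i, (k • perronVector lam) i = k * ((lam ^ 2 + 1) / 2) := by
  simp only [perronVector, Pi.smul_apply, smul_eq_mul, Fin.sum_univ_three, Fin.isValue,
    cons_val_zero, cons_val_one, Matrix.cons_val]
  ring

theorem perronVector_le_stateCount_zero (h7 : 7 < lam) (h8 : lam < 8) :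
    (1 : ℝ) • perronVector lam ≤ fun i => (stateCount 0 i : ℝ) := by
  intro i
  fin_cases i <;>
    simp only [perronVector, stateCount_zero, Pi.smul_apply, smul_eq_mul, one_mul, Fin.isValue,
      Fin.zero_eta, Fin.mk_one, Fin.reduceFinMk, cons_val_zero, cons_val_one, Matrix.cons_val,
      Nat.cast_ofNat] <;>
    nlinarith

theorem stateCount_zero_le_perronVector (h7 : 7 < lam) :
    (fun i => (stateCount 0 i : ℝ)) ≤ (3 : ℝ) • perronVector lam := by
  intro i
  fin_cases i <;>
    simp only [perronVector, stateCount_zero, Pi.smul_apply, smul_eq_mul, Fin.isValue,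
      Fin.zero_eta, Fin.mk_one, Fin.reduceFinMk, cons_val_zero, cons_val_one, Matrix.cons_val,
      Nat.cast_ofNat] <;>
    nlinarith

theorem ncard_bounds (hlam : lam ^ 3 = 8 * lam ^ 2 - lam + 6) (n : ℕ) :
    lam ^ n * ((lam ^ 2 + 1) / 2) ≤ (OSC (n + 2)).ncard ∧
      ((OSC (n + 2)).ncard : ℝ) ≤ 3 * lam ^ n * ((lam ^ 2 + 1) / 2) := by
  have hA i j : (0 : ℝ) ≤ transfer.map (↑) i j := Nat.cast_nonneg _
  have he := transfer_mulVec_perronVector hlam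
  let x n i : ℝ := stateCount n i
  have hx n : x (n + 1) = transfer.map (↑) *ᵥ x n := by
    ext i
    simp only [x, stateCount_succ]
    exact RingHom.map_mulVec (Nat.castRingHom ℝ) transfer (stateCount n) i
  have hcard : ((OSC (n + 2)).ncard : ℝ) = ∑ i, (stateCount n i : ℝ) := by
    rw [ncard_eq_sum_stateCount, Nat.cast_sum]
  have h7 := seven_lt_of_charEq hlam
  rw [hcard]
  constructor
  · calc lam ^ n * ((lam ^ 2 + 1) / 2) = ∑ i, ((1 * lam ^ n) • perronVector lam) i := by
          rw [sum_smul_perronVector, one_mul]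
      _ ≤ _ := sum_le_sum fun i _ => smul_le_of_mulVec_recurrence (x := x) hA he hx
          (perronVector_le_stateCount_zero h7 (lt_eight_of_charEq hlam)) n i
  · calc ∑ i, (stateCount n i : ℝ) ≤ ∑ i, ((3 * lam ^ n) • perronVector lam) i :=
          sum_le_sum fun i _ => le_smul_of_mulVec_recurrence (x := x) hA he hx
            (stateCount_zero_le_perronVector h7) n i
      _ = _ := by rw [sum_smul_perronVector, mul_assoc]

end OSC

theorem stmt8 :
    (∃! lam : ℝ, lam ^ 3 = 8 * lam ^ 2 - lam + 6) ∧
    ∀ lam : ℝ, lam ^ 3 = 8 * lam ^ 2 - lam + 6 →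
      7 < lam ∧ lam < 8 ∧
      Filter.Tendsto (fun m : ℕ => ((OSC m).ncard : ℝ) ^ (1 / (m : ℝ)))
        Filter.atTop (nhds lam) := by
  refine ⟨OSC.existsUnique_charEq, fun lam hlam => ⟨OSC.seven_lt_of_charEq hlam,
    OSC.lt_eight_of_charEq hlam, ?_⟩⟩
  have hlam0 : 0 < lam := by linarith [OSC.seven_lt_of_charEq hlam]
  have hshift (k : ℝ) (n : ℕ) : k / lam ^ 2 * lam ^ (n + 2) = k * lam ^ n := by
    field_simp; ring
  refine tendsto_rpow_one_div_of_le_of_le hlam0 (a := (lam ^ 2 + 1) / 2 / lam ^ 2)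
    (b := 3 * ((lam ^ 2 + 1) / 2) / lam ^ 2) (by positivity) (by positivity) ?_ ?_ <;>
    filter_upwards [eventually_ge_atTop 2] with m hm <;>
    obtain ⟨n, rfl⟩ := Nat.exists_eq_add_of_le' hm <;>
    rw [hshift]
  · linarith [(OSC.ncard_bounds hlam n).1]
  · linarith [(OSC.ncard_bounds hlam n).2]
end
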